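/- Let n ≥ 2, let a = (a₁,…,aₙ) be a vector of positive integers, let k be a positive integer, and set Λ = {α ∈ ℤ₊ⁿ : ⟨a,α⟩ = k} (a finite set). Fix residues r₁ = r₂ = 0 and r₃, …, rₙ ∈ {0,…,999}, and let S = { l ∈ ℤⁿ : lⱼ ≠ 0 for all j, and lⱼ ≡ rⱼ (mod 1000) for all j }. In the Hilbert space H = ⊕_{α∈Λ} L²(𝕋ⁿ), let V be the closure of { (D^α f)_{α∈Λ} : f a trigonometric polynomial with f̂ supported in S }, and let P be the orthogonal projection of H onto V. For l ∈ ℤⁿ and α ∈ Λ, let Z_α^l ∈ H be the tuple whose α-th coordinate is the character e_l(x) = e^{2πi⟨l,x⟩} and whose other coordinates are 0. Then: (i) if lⱼ = 0 for some j, or lⱼ ≢ rⱼ (mod 1000) for some j, then P(Z_α^l) = 0; (ii) otherwise, P(Z_α^l) = λ̄_α · ( Σ_{β∈Λ} |λ_β|² )^{−1} · ( λ_β e_l )_{β∈Λ}, where λ_β = ∏_{j=1}^{n} (2πi lⱼ)^{βⱼ}. -/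

import Mathlib

open MeasureTheory

noncomputable section

abbrev TorusN (n : ℕ) := Fin n → AddCircle (1 : ℝ)

/-- The character `e_l(x) = e^{2πi⟨l,x⟩}` on the torus `𝕋ⁿ`. -/
noncomputable def char {n : ℕ} (l : Fin n → ℤ) : C(TorusN n, ℂ) :=
  ⟨fun x => ∏ j, fourier (l j) (x j),
   continuous_finset_prod _ fun j _ => (fourier (l j)).continuous.comp (continuous_apply j)⟩

/-- Symbol of the operator with coefficients `c` at frequency `l`. -/
noncomputable def opSymbol {n : ℕ} (c : (Fin n → ℕ) →₀ ℂ) (l : Fin n → ℤ) : ℂ :=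
  ∑ α ∈ c.support, c α * ∏ j, (2 * Real.pi * Complex.I * (l j)) ^ (α j)

/-- Action of the operator with coefficients `c` on the trigonometric polynomial with
Fourier coefficients `d`. -/
noncomputable def applyOp {n : ℕ} (c : (Fin n → ℕ) →₀ ℂ) (d : (Fin n → ℤ) →₀ ℂ) :
    C(TorusN n, ℂ) :=
  ∑ l ∈ d.support, (d l * opSymbol c l) • char l

/-- `Λ = {α ∈ ℤ₊ⁿ : ⟨a,α⟩ = k}`, as a finite set (all such `α` satisfy `α i ≤ k` when the
`a i` are positive). -/
def Lam (n : ℕ) (a : Fin n → ℕ) (k : ℕ) : Finset (Fin n → ℕ) :=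
  (Finset.Icc (0 : Fin n → ℕ) fun _ => k).filter (fun β => ∑ i, a i * β i = k)

/-- The Hilbert space `H = ⊕_{α∈Λ} L²(𝕋ⁿ)`. -/
abbrev Hsp (n : ℕ) (a : Fin n → ℕ) (k : ℕ) :=
  PiLp 2 (fun _ : ↥(Lam n a k) => Lp ℂ 2 (volume : Measure (TorusN n)))

/-- The subspace `V ⊆ H`: closure of the set of tuples `(D^α f)_{α∈Λ}` over trigonometric
polynomials `f` with Fourier coefficients supported in
`S = {l : lⱼ ≠ 0 and lⱼ ≡ rⱼ (mod 1000) for all j}`. -/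
noncomputable def Vsp (n : ℕ) (a : Fin n → ℕ) (k : ℕ) (r : Fin n → ℕ) :
    Submodule ℂ (Hsp n a k) :=
  (Submodule.span ℂ {x : Hsp n a k | ∃ d : (Fin n → ℤ) →₀ ℂ,
      (∀ l ∈ d.support, ∀ j, l j ≠ 0 ∧ l j % 1000 = (r j : ℤ)) ∧
      x = fun α : ↥(Lam n a k) => ContinuousMap.toLp 2 volume ℂ
        (applyOp (Finsupp.single (α.1 : Fin n → ℕ) 1) d)}).topologicalClosure

/-- `λ_β = ∏_j (2πi lⱼ)^{βⱼ}`. -/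
noncomputable def lamCoef {n : ℕ} (l : Fin n → ℤ) (β : Fin n → ℕ) : ℂ :=
  ∏ j, (2 * Real.pi * Complex.I * (l j)) ^ (β j)

/-- `Z_α^l ∈ H`: the tuple whose `α`-th coordinate is the character `e_l` and whose other
coordinates vanish. -/
noncomputable def Ztup {n : ℕ} (a : Fin n → ℕ) (k : ℕ) (α : ↥(Lam n a k)) (l : Fin n → ℤ) :
    Hsp n a k :=
  WithLp.toLp 2 (fun β => if β = α then ContinuousMap.toLp 2 volume ℂ (char l) else 0)

/-! ### Auxiliary lemmas -/

lemma volume_eq_haar1 : (volume : Measure (AddCircle (1:ℝ))) = AddCircle.haarAddCircle := by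
  rw [AddCircle.volume_eq_smul_haarAddCircle]; simp

lemma integral_fourier1 (m : ℤ) :
    ∫ x : AddCircle (1:ℝ), fourier m x = if m = 0 then 1 else 0 := by
  rw [volume_eq_haar1]
  split_ifs with h
  · subst h; simp only [fourier_zero]; simp
  · exact integral_eq_zero_of_add_right_eq_neg (fourier_add_half_inv_index h one_pos)

lemma integral_char {n : ℕ} (l : Fin n → ℤ) :
    ∫ x : TorusN n, char l x = if l = 0 then 1 else 0 := by
  have : ∫ x : TorusN n, char l x = ∏ j, ∫ y : AddCircle (1:ℝ), fourier (l j) y := by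
    simpa [char, volume_pi] using
      MeasureTheory.integral_fintype_prod_eq_prod
        (fun j (y : AddCircle (1:ℝ)) => (fourier (l j) y : ℂ))
  rw [this]
  simp_rw [integral_fourier1]
  by_cases h : l = 0
  · subst h; simp
  · rw [if_neg h]
    obtain ⟨j, hj⟩ : ∃ j, l j ≠ 0 := by
      by_contra hc; push_neg at hc; exact h (funext hc)
    exact Finset.prod_eq_zero (Finset.mem_univ j) (by simp [hj])

lemma inner_char_char {n : ℕ} (l m : Fin n → ℤ) :
    inner (𝕜 := ℂ) (ContinuousMap.toLp (E := ℂ) 2 volume ℂ (char l))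
      (ContinuousMap.toLp (E := ℂ) 2 volume ℂ (char m)) = if l = m then 1 else 0 := by
  rw [ContinuousMap.inner_toLp]
  have : ∀ x : TorusN n, (starRingEnd ℂ) (char l x) * char m x = char (m - l) x := by
    intro x
    simp only [char, ContinuousMap.coe_mk, map_prod, ← Finset.prod_mul_distrib]
    congr 1; ext j
    rw [← fourier_neg, ← fourier_add]
    congr 1; simp; ring_nf
  simp_rw [mul_comm _ ((starRingEnd ℂ) _)]
  simp_rw [this]
  rw [integral_char]
  congr 1
  simp [sub_eq_zero, eq_comm]

lemma opSymbol_single {n : ℕ} (β : Fin n → ℕ) (l : Fin n → ℤ) :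
    opSymbol (Finsupp.single β 1) l = lamCoef l β := by
  rw [opSymbol, Finsupp.support_single_ne_zero _ one_ne_zero]
  simp [lamCoef]

lemma inner_char_applyOp {n : ℕ} (β : Fin n → ℕ) (d : (Fin n → ℤ) →₀ ℂ) (l : Fin n → ℤ) :
    inner (𝕜 := ℂ) (ContinuousMap.toLp (E := ℂ) 2 volume ℂ (char l))
      (ContinuousMap.toLp (E := ℂ) 2 volume ℂ (applyOp (Finsupp.single β 1) d))
      = d l * lamCoef l β := by
  rw [applyOp, map_sum, inner_sum]
  simp_rw [_root_.map_smul, inner_smul_right, opSymbol_single, inner_char_char,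
    mul_ite, mul_one, mul_zero]
  rw [Finset.sum_ite_eq d.support l (fun m => d m * lamCoef m β)]
  by_cases h : l ∈ d.support
  · rw [if_pos h]
  · rw [if_neg h, Finsupp.notMem_support_iff.mp h, zero_mul]

section Main

variable {n : ℕ} {a : Fin n → ℕ} {k : ℕ}

/-- The generator of `Vsp` attached to a coefficient family `d`. -/
noncomputable def gen (a : Fin n → ℕ) (k : ℕ) (d : (Fin n → ℤ) →₀ ℂ) : Hsp n a k :=
  WithLp.toLp 2 (fun α : ↥(Lam n a k) => ContinuousMap.toLp 2 volume ℂ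
    (applyOp (Finsupp.single (α.1 : Fin n → ℕ) 1) d))

lemma inner_Ztup_gen (α : ↥(Lam n a k)) (l : Fin n → ℤ) (d : (Fin n → ℤ) →₀ ℂ) :
    inner (𝕜 := ℂ) (Ztup a k α l) (gen a k d) = d l * lamCoef l (α : Fin n → ℕ) := by
  rw [PiLp.inner_apply]
  have : ∀ β : ↥(Lam n a k),
      inner (𝕜 := ℂ) (Ztup a k α l β) (gen a k d β)
        = if β = α then d l * lamCoef l (β : Fin n → ℕ) else 0 := by
    intro β
    by_cases h : β = α
    · rw [if_pos h, Ztup, PiLp.toLp_apply, if_pos h, gen, PiLp.toLp_apply, inner_char_applyOp]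
    · rw [if_neg h, Ztup]
      simp only [PiLp.toLp_apply, if_neg h, inner_zero_left]
  simp_rw [this]
  simp

/-- The tuple `(λ_β e_l)_β`. -/
noncomputable def Wtup (a : Fin n → ℕ) (k : ℕ) (l : Fin n → ℤ) : Hsp n a k :=
  WithLp.toLp 2 (fun β : ↥(Lam n a k) => lamCoef l (β : Fin n → ℕ) • ContinuousMap.toLp 2 volume ℂ (char l))

lemma inner_Wtup_gen (l : Fin n → ℤ) (d : (Fin n → ℤ) →₀ ℂ) :
    inner (𝕜 := ℂ) (Wtup a k l) (gen a k d)
      = d l * ((∑ β : ↥(Lam n a k), ‖lamCoef l (β : Fin n → ℕ)‖ ^ 2 : ℝ) : ℂ) := by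
  rw [PiLp.inner_apply]
  have : ∀ β : ↥(Lam n a k),
      inner (𝕜 := ℂ) (Wtup a k l β) (gen a k d β)
        = d l * ((‖lamCoef l (β : Fin n → ℕ)‖ ^ 2 : ℝ) : ℂ) := by
    intro β
    rw [Wtup, gen, PiLp.toLp_apply, PiLp.toLp_apply, inner_smul_left, inner_char_applyOp]
    have h2 : ((‖lamCoef l (β : Fin n → ℕ)‖ ^ 2 : ℝ) : ℂ)
        = (starRingEnd ℂ) (lamCoef l (β : Fin n → ℕ)) * lamCoef l (β : Fin n → ℕ) := by
      rw [← Complex.normSq_eq_conj_mul_self, Complex.normSq_eq_norm_sq]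
    rw [h2]; ring
  simp_rw [this]
  rw [← Finset.mul_sum]
  push_cast
  rfl

lemma gen_mem_Vsp (r : Fin n → ℕ) (d : (Fin n → ℤ) →₀ ℂ)
    (hd : ∀ m ∈ d.support, ∀ j, m j ≠ 0 ∧ m j % 1000 = (r j : ℤ)) :
    gen a k d ∈ Vsp n a k r := by
  apply Submodule.le_topologicalClosure
  exact Submodule.subset_span ⟨d, hd, rfl⟩

lemma perp_Vsp (r : Fin n → ℕ) (u : Hsp n a k)
    (hu : ∀ d : (Fin n → ℤ) →₀ ℂ,
      (∀ m ∈ d.support, ∀ j, m j ≠ 0 ∧ m j % 1000 = (r j : ℤ)) →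
      inner (𝕜 := ℂ) u (gen a k d) = 0) :
    ∀ v ∈ Vsp n a k r, inner (𝕜 := ℂ) u v = 0 := by
  intro v hv
  have hker : Vsp n a k r ≤ (innerSL ℂ u).ker := by
    apply Submodule.topologicalClosure_minimal
    · rw [Submodule.span_le]
      rintro x ⟨d, hd, hx⟩
      obtain rfl : x = gen a k d := congrArg (WithLp.toLp 2) hx
      exact hu d hd
    · exact ContinuousLinearMap.isClosed_ker (innerSL ℂ u)
  exact hker hv

lemma proj_eq_of (r : Fin n → ℕ) (P : Hsp n a k →L[ℂ] Hsp n a k)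
    (hPmem : ∀ x : Hsp n a k, P x ∈ Vsp n a k r)
    (hPorth : ∀ x : Hsp n a k, ∀ v ∈ Vsp n a k r, inner (𝕜 := ℂ) (x - P x) v = 0)
    (z w : Hsp n a k) (hw : w ∈ Vsp n a k r)
    (horth : ∀ v ∈ Vsp n a k r, inner (𝕜 := ℂ) (z - w) v = 0) :
    P z = w := by
  have hv : P z - w ∈ Vsp n a k r := Submodule.sub_mem _ (hPmem z) hw
  have h0 : inner (𝕜 := ℂ) (P z - w) (P z - w) = 0 := by
    have h1 := hPorth z _ hv
    have h2 := horth _ hv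
    calc inner (𝕜 := ℂ) (P z - w) (P z - w)
        = inner (𝕜 := ℂ) ((z - w) - (z - P z)) (P z - w) := by
          congr 1; abel
      _ = inner (𝕜 := ℂ) (z - w) (P z - w) - inner (𝕜 := ℂ) (z - P z) (P z - w) :=
          inner_sub_left _ _ _
      _ = 0 := by rw [h1, h2, sub_zero]
  rw [sub_eq_zero.mp (inner_self_eq_zero.mp h0)]

lemma Wtup_eq_gen (l : Fin n → ℤ) :
    Wtup a k l = gen a k (Finsupp.single l 1) := by
  refine congrArg (WithLp.toLp 2) ?_
  funext β
  rw [applyOp, Finsupp.support_single_ne_zero _ one_ne_zero,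
    Finset.sum_singleton, Finsupp.single_eq_same, one_mul, opSymbol_single, _root_.map_smul]

lemma lamCoef_ne_zero (l : Fin n → ℤ) (hl : ∀ j, l j ≠ 0) (β : Fin n → ℕ) :
    lamCoef l β ≠ 0 := by
  rw [lamCoef]
  apply Finset.prod_ne_zero_iff.mpr
  intro j _
  apply pow_ne_zero
  apply mul_ne_zero
  apply mul_ne_zero
  apply mul_ne_zero
  · norm_num
  · exact_mod_cast Complex.ofReal_ne_zero.mpr Real.pi_ne_zero
  · exact Complex.I_ne_zero
  · exact_mod_cast Int.cast_ne_zero.mpr (hl j)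

end Main

/-- Explicit formula for the orthogonal projection `P : H → V` on the orthonormal basis
`Z_α^l`: (i) if some `lⱼ = 0` or some `lⱼ ≢ rⱼ (mod 1000)` then `P(Z_α^l) = 0`;
(ii) otherwise `P(Z_α^l) = λ̄_α (Σ_β |λ_β|²)⁻¹ (λ_β e_l)_β`. -/
theorem stmt8 (n : ℕ) (hn : 2 ≤ n) (a : Fin n → ℕ) (ha : ∀ i, 0 < a i)
    (k : ℕ) (hk : 0 < k)
    (r : Fin n → ℕ) (hr0 : r ⟨0, by omega⟩ = 0) (hr1 : r ⟨1, by omega⟩ = 0) (hr : ∀ j, r j < 1000)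
    (P : Hsp n a k →L[ℂ] Hsp n a k)
    (hPmem : ∀ x : Hsp n a k, P x ∈ Vsp n a k r)
    (hPorth : ∀ x : Hsp n a k, ∀ v ∈ Vsp n a k r, inner (𝕜 := ℂ) (x - P x) v = 0)
    (α : ↥(Lam n a k)) (l : Fin n → ℤ) :
    (((∃ j, l j = 0) ∨ (∃ j, l j % 1000 ≠ (r j : ℤ))) → P (Ztup a k α l) = 0) ∧
    ((∀ j, l j ≠ 0) → (∀ j, l j % 1000 = (r j : ℤ)) →
      P (Ztup a k α l) =
        ((starRingEnd ℂ) (lamCoef l α) *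
            ((((∑ β : ↥(Lam n a k), ‖lamCoef l β‖ ^ 2 : ℝ)) : ℂ))⁻¹) •
          fun β : ↥(Lam n a k) =>
            lamCoef l β • ContinuousMap.toLp 2 volume ℂ (char l)) := by
  constructor
  · -- Case (i): bad frequency
    intro hbad
    apply proj_eq_of r P hPmem hPorth _ 0 (Submodule.zero_mem _)
    apply perp_Vsp
    intro d hd
    rw [sub_zero, inner_Ztup_gen]
    have hdl : d l = 0 := by
      by_contra hne
      have hmem : l ∈ d.support := Finsupp.mem_support_iff.mpr hne
      rcases hbad with ⟨j, hj⟩ | ⟨j, hj⟩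
      · exact (hd l hmem j).1 hj
      · exact hj (hd l hmem j).2
    rw [hdl, zero_mul]
  · -- Case (ii): good frequency
    intro hl hmod
    set S : ℝ := ∑ β : ↥(Lam n a k), ‖lamCoef l β‖ ^ 2 with hS
    set c : ℂ := (starRingEnd ℂ) (lamCoef l α) * ((S : ℂ))⁻¹ with hc
    have hSpos : 0 < S := by
      have h1 : 0 < ‖lamCoef l (α : Fin n → ℕ)‖ ^ 2 := by
        exact pow_pos (norm_pos_iff.mpr (lamCoef_ne_zero l hl (α : Fin n → ℕ))) 2
      refine lt_of_lt_of_le h1 ?_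
      exact Finset.single_le_sum
        (f := fun β : ↥(Lam n a k) => ‖lamCoef l (β : Fin n → ℕ)‖ ^ 2)
        (fun β _ => by positivity) (Finset.mem_univ α)
    have hSne : ((S : ℂ)) ≠ 0 := by
      exact_mod_cast Complex.ofReal_ne_zero.mpr (ne_of_gt hSpos)
    suffices h : P (Ztup a k α l) = c • Wtup a k l by rw [h, WithLp.ofLp_smul]; rfl
    apply proj_eq_of r P hPmem hPorth
    · apply Submodule.smul_mem
      rw [Wtup_eq_gen]
      apply gen_mem_Vsp
      intro m hm j
      have : m = l := by
        rw [Finsupp.support_single_ne_zero _ one_ne_zero] at hm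
        exact Finset.mem_singleton.mp hm
      subst this
      exact ⟨hl j, hmod j⟩
    · apply perp_Vsp
      intro d hd
      rw [inner_sub_left, inner_smul_left, inner_Ztup_gen, inner_Wtup_gen]
      rw [hc]
      rw [map_mul, Complex.conj_conj, map_inv₀, Complex.conj_ofReal]
      have hinv : ((S : ℂ))⁻¹ * (S : ℂ) = 1 := inv_mul_cancel₀ hSne
      linear_combination (-(d l * lamCoef l (α : Fin n → ℕ))) * hinv

end
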